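/- Inductive emergence from sums of compositions (Lemma 4.6): let P be a commutative monoid under * with square roots and Ψ₁ : P → Op be a monoid homomorphism into (Op, ∘) that is moreover 'additive-compatible' in the sense that P also carries a + with halving and Ψ₁(ε+ε') = Ψ₁(ε) + Ψ₁(ε'). Given l ≥ 1 and families Ψ₂ⱼ : Qⱼ → Op and Ψ₃ⱼ : Rⱼ → Op for j = 1,…,l, suppose Ψ₁ emerges from each Ψ₂ⱼ and from each Ψ₃ⱼ. Then for every s with 1 ≤ s ≤ l, Ψ₁ emerges from the family (δ₁,…,δ_s,κ₁,…,κ_s) ↦ Σ_{j=1}^{s} Ψ₂ⱼ(δⱼ) ∘ Ψ₃ⱼ(κⱼ). -/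
import Mathlib


/-- Lemma 4.6: inductive emergence from sums of compositions. -/
theorem stmt8 {K Op P : Type*} [Field K] [Ring Op] [Algebra K Op]
    [CommMonoid P] [AddCommMonoid P]
    (hsq : ∀ ε : P, ∃ s : P, s * s = ε)
    (hhalf : ∀ ε : P, ∃ h : P, h + h = ε)
    (Ψ₁ : P → Op)
    (hmul : ∀ ε ε' : P, Ψ₁ (ε * ε') = Ψ₁ ε * Ψ₁ ε')
    (hadd : ∀ ε ε' : P, Ψ₁ (ε + ε') = Ψ₁ ε + Ψ₁ ε')
    (l : ℕ) (hl : 1 ≤ l)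
    (Q R : Fin l → Type*) (Ψ₂ : (j : Fin l) → Q j → Op) (Ψ₃ : (j : Fin l) → R j → Op)
    (hF : ∀ j : Fin l, ∃ F : P → Q j, ∀ ε, Ψ₁ ε = Ψ₂ j (F ε))
    (hG : ∀ j : Fin l, ∃ G : P → R j, ∀ ε, Ψ₁ ε = Ψ₃ j (G ε)) :
    ∀ (s : ℕ) (hs1 : 1 ≤ s) (hs : s ≤ l),
      ∃ H : P → ((j : Fin s) → Q (Fin.castLE hs j)) × ((j : Fin s) → R (Fin.castLE hs j)),
        ∀ ε : P, Ψ₁ ε =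
          ∑ j : Fin s, Ψ₂ (Fin.castLE hs j) ((H ε).1 j) * Ψ₃ (Fin.castLE hs j) ((H ε).2 j) := by
  -- choice functions
  choose F hFs using hF
  choose G hGs using hG
  choose sq hsq' using hsq
  choose hf hhalf' using hhalf
  intro s
  induction s with
  | zero => intro hs1; omega
  | succ n ih =>
    intro hs1 hs
    cases n with
    | zero =>
      refine ⟨fun ε => (fun j => F _ (sq ε), fun j => G _ (sq ε)), fun ε => ?_⟩
      rw [Fin.sum_univ_one, ← hFs, ← hGs, ← hmul, hsq']
    | succ m =>
      have hm : m + 1 ≤ l := by omega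
      obtain ⟨H, hH⟩ := ih (by omega) hm
      refine ⟨fun ε =>
        (Fin.snoc (α := fun j => Q (Fin.castLE hs j)) ((H (hf ε)).1) (F _ (sq (hf ε))),
         Fin.snoc (α := fun j => R (Fin.castLE hs j)) ((H (hf ε)).2) (G _ (sq (hf ε)))),
        fun ε => ?_⟩
      rw [Fin.sum_univ_castSucc]
      simp only [Fin.snoc_castSucc, Fin.snoc_last]
      conv_lhs => rw [← hhalf' ε, hadd]
      congr 1
      · exact hH (hf ε)
      · rw [← hFs, ← hGs, ← hmul, hsq']
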